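/- Let A be a linear operator on ℝ^{n×n} with ⟨Z, A(Z)⟩ ≥ 0 for all Z, such that A∘A ⪰ A in the sense that ⟨Z, (A∘A)(Z)⟩ ≥ ⟨Z, A(Z)⟩ for all Z. Suppose further P is an orthogonal projection onto a subspace T of ℝ^{n×n} with ‖P − P∘A∘P‖_{F→F} ≤ 1/2. Then for every H ∈ ℝ^{n×n}, ‖A(P(H))‖_F² ≥ (1/2)‖P(H)‖_F². -/

import Mathlib

open Matrix

/-- Frobenius inner product `⟨A,B⟩ = Tr(A Bᴴ)`. -/
def finner {n : ℕ} (A B : Matrix (Fin n) (Fin n) ℝ) : ℝ :=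
  Matrix.trace (A * Bᵀ)

/-- Frobenius norm. -/
noncomputable def frob {n : ℕ} (A : Matrix (Fin n) (Fin n) ℝ) : ℝ :=
  Real.sqrt (finner A A)

/-!
Split `A` into its symmetric part `S` and skew part `K`. The hypotheses say `S ≥ 0` and
`S² - S ≥ KᵀK`, so every eigenvalue of `S` lies in `{0} ∪ [1, ∞)` and `K` vanishes on the
eigenvectors for `0` and `1`. Expanding in an eigenbasis of `S`, and adding the vanishing sum
`⟨x, K x⟩ = 0`, the difference `‖A x‖² - ⟨x, A x⟩` becomes a sum of nonnegative terms.
For `x = P H`, the contraction hypothesis and Cauchy–Schwarz give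
`½‖x‖² ≤ ⟨x, P A x⟩ = ⟨x, A x⟩`.
-/

open scoped RealInnerProductSpace

lemma mul_add_mul_le_sq_of_one_le_or_sq_eq {μ c k a : ℝ} (ha : a = μ * c + k)
    (h : 1 ≤ μ ∨ μ ^ 2 = μ ∧ k = 0) : c * a + c * k ≤ a ^ 2 := by
  subst ha
  rcases h with hμ | ⟨hμ, rfl⟩
  · nlinarith [sq_nonneg ((μ - 1) * c + k), mul_nonneg (sub_nonneg.2 hμ) (sq_nonneg c)]
  · linear_combination (-c ^ 2) * hμ

lemma half_mul_norm_sq_le_inner {E : Type*} [NormedAddCommGroup E] [InnerProductSpace ℝ E]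
    {m w : E} (h : ‖m - w‖ ≤ 1 / 2 * ‖m‖) : 1 / 2 * ‖m‖ ^ 2 ≤ ⟪m, w⟫ := by
  have hcs : ⟪m, m - w⟫ ≤ ‖m‖ * ‖m - w‖ := real_inner_le_norm m (m - w)
  rw [inner_sub_right, real_inner_self_eq_norm_sq] at hcs
  nlinarith [mul_le_mul_of_nonneg_left h (norm_nonneg m)]

namespace LinearMap

variable {E : Type*} [NormedAddCommGroup E] [InnerProductSpace ℝ E] [FiniteDimensional ℝ E]
  (A : E →ₗ[ℝ] E)

noncomputable def symmPart : E →ₗ[ℝ] E := (2⁻¹ : ℝ) • (A + adjoint A)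

noncomputable def skewPart : E →ₗ[ℝ] E := (2⁻¹ : ℝ) • (A - adjoint A)

lemma symmPart_add_skewPart : A.symmPart + A.skewPart = A := by
  unfold symmPart skewPart; module

lemma symmPart_apply_add_skewPart_apply (x : E) : A.symmPart x + A.skewPart x = A x := by
  rw [← add_apply, symmPart_add_skewPart]

lemma symmPart_sub_skewPart : A.symmPart - A.skewPart = adjoint A := by
  unfold symmPart skewPart; module

lemma isSymmetric_symmPart : A.symmPart.IsSymmetric := by
  intro u v
  simp only [symmPart, smul_apply, add_apply, real_inner_smul_left, real_inner_smul_right,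
    inner_add_left, inner_add_right, adjoint_inner_left, adjoint_inner_right]
  ring

lemma inner_skewPart_left (u v : E) : ⟪A.skewPart u, v⟫ = -⟪u, A.skewPart v⟫ := by
  simp only [skewPart, smul_apply, sub_apply, real_inner_smul_left, real_inner_smul_right,
    inner_sub_left, inner_sub_right, adjoint_inner_left, adjoint_inner_right]
  ring

lemma inner_skewPart_self (x : E) : ⟪x, A.skewPart x⟫ = 0 := by
  have h := A.inner_skewPart_left x x
  rw [real_inner_comm] at h
  linarith

lemma inner_symmPart_self (x : E) : ⟪x, A.symmPart x⟫ = ⟪x, A x⟫ := by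
  rw [← A.symmPart_apply_add_skewPart_apply x, inner_add_right, inner_skewPart_self, add_zero]

lemma inner_apply_apply_self (x : E) :
    ⟪x, A (A x)⟫ = ‖A.symmPart x‖ ^ 2 - ‖A.skewPart x‖ ^ 2 := by
  rw [← adjoint_inner_left, ← A.symmPart_apply_add_skewPart_apply x, ← A.symmPart_sub_skewPart,
    sub_apply, inner_sub_left, inner_add_right, inner_add_right,
    ← real_inner_self_eq_norm_sq, ← real_inner_self_eq_norm_sq, real_inner_comm (A.skewPart x)]
  ring

variable {A}

lemma one_le_or_sq_eq_and_skewPart_eq_zero (hpos : ∀ z, 0 ≤ ⟪z, A z⟫)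
    (hsq : ∀ z, ⟪z, A z⟫ ≤ ⟪z, A (A z)⟫) {v : E} {μ : ℝ} (hv : ‖v‖ = 1)
    (hSv : A.symmPart v = μ • v) : 1 ≤ μ ∨ μ ^ 2 = μ ∧ A.skewPart v = 0 := by
  have hquad : ⟪v, A v⟫ = μ := by
    rw [← inner_symmPart_self, hSv, real_inner_smul_right, real_inner_self_eq_norm_sq, hv]
    ring
  have hK : ‖A.skewPart v‖ ^ 2 ≤ μ ^ 2 - μ := by
    have h := hsq v
    rw [inner_apply_apply_self, hSv, norm_smul, hv, hquad, Real.norm_eq_abs, mul_one,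
      sq_abs] at h
    linarith
  have hμ : 0 ≤ μ := hquad ▸ hpos v
  by_cases h1 : 1 ≤ μ
  · exact Or.inl h1
  · have hK0 : ‖A.skewPart v‖ ^ 2 ≤ 0 := by nlinarith
    refine Or.inr ⟨by nlinarith [sq_nonneg ‖A.skewPart v‖], ?_⟩
    exact norm_eq_zero.1 (pow_eq_zero_iff two_ne_zero |>.1 (le_antisymm hK0 (sq_nonneg _)))

theorem inner_self_apply_le_norm_apply_sq (hpos : ∀ z, 0 ≤ ⟪z, A z⟫)
    (hsq : ∀ z, ⟪z, A z⟫ ≤ ⟪z, A (A z)⟫) (x : E) : ⟪x, A x⟫ ≤ ‖A x‖ ^ 2 := by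
  have hS := A.isSymmetric_symmPart
  set b := hS.eigenvectorBasis rfl
  set μ := hS.eigenvalues rfl
  have hcoord : ∀ i, ⟪b i, A x⟫ = μ i * ⟪x, b i⟫ + ⟪b i, A.skewPart x⟫ := by
    intro i
    rw [← A.symmPart_apply_add_skewPart_apply x, inner_add_right, ← hS, hS.apply_eigenvectorBasis,
      real_inner_smul_left, real_inner_comm]
    rfl
  have hcases : ∀ i, 1 ≤ μ i ∨ μ i ^ 2 = μ i ∧ ⟪b i, A.skewPart x⟫ = 0 := by
    intro i
    refine (one_le_or_sq_eq_and_skewPart_eq_zero hpos hsq (b.orthonormal.1 i)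
      (hS.apply_eigenvectorBasis rfl i)).imp_right fun ⟨hμ, hK⟩ => ⟨hμ, ?_⟩
    rw [← neg_eq_zero, ← inner_skewPart_left, hK, inner_zero_left]
  calc ⟪x, A x⟫ = ⟪x, A x⟫ + ⟪x, A.skewPart x⟫ := by rw [inner_skewPart_self, add_zero]
    _ = ∑ i, (⟪x, b i⟫ * ⟪b i, A x⟫ + ⟪x, b i⟫ * ⟪b i, A.skewPart x⟫) := by
      rw [Finset.sum_add_distrib, b.sum_inner_mul_inner, b.sum_inner_mul_inner]
    _ ≤ ∑ i, ⟪b i, A x⟫ ^ 2 := Finset.sum_le_sum fun i _ =>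
      mul_add_mul_le_sq_of_one_le_or_sq_eq (hcoord i) (hcases i)
    _ = ‖A x‖ ^ 2 := b.sum_sq_inner_right _

end LinearMap

theorem half_mul_norm_sq_le_norm_apply_sq {E : Type*} [NormedAddCommGroup E]
    [InnerProductSpace ℝ E] [FiniteDimensional ℝ E] {A P : E →ₗ[ℝ] E}
    (hpos : ∀ z, 0 ≤ ⟪z, A z⟫) (hsq : ∀ z, ⟪z, A z⟫ ≤ ⟪z, A (A z)⟫) (hP : P.IsSymmetric)
    {m : E} (hm : P m = m) (hcontr : ‖m - P (A m)‖ ≤ 1 / 2 * ‖m‖) :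
    1 / 2 * ‖m‖ ^ 2 ≤ ‖A m‖ ^ 2 :=
  calc 1 / 2 * ‖m‖ ^ 2 ≤ ⟪m, P (A m)⟫ := half_mul_norm_sq_le_inner hcontr
    _ = ⟪m, A m⟫ := by rw [← hP, hm]
    _ ≤ ‖A m‖ ^ 2 := LinearMap.inner_self_apply_le_norm_apply_sq hpos hsq m

namespace Matrix

noncomputable def frobeniusEquiv (n : ℕ) :
    Matrix (Fin n) (Fin n) ℝ ≃ₗ[ℝ] EuclideanSpace ℝ (Fin n × Fin n) :=
  (LinearEquiv.curry ℝ ℝ (Fin n) (Fin n)).symm.trans (WithLp.linearEquiv 2 ℝ _).symm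

lemma inner_frobeniusEquiv {n : ℕ} (X Y : Matrix (Fin n) (Fin n) ℝ) :
    ⟪frobeniusEquiv n X, frobeniusEquiv n Y⟫ = finner X Y := by
  simp only [finner, trace, diag, mul_apply, transpose_apply, PiLp.inner_apply,
    RCLike.inner_apply, conj_trivial, ← Finset.sum_product']
  exact Finset.sum_congr rfl fun _ _ => mul_comm _ _

lemma frob_eq_norm_frobeniusEquiv {n : ℕ} (X : Matrix (Fin n) (Fin n) ℝ) :
    frob X = ‖frobeniusEquiv n X‖ := by
  rw [frob, ← inner_frobeniusEquiv, real_inner_self_eq_norm_sq, Real.sqrt_sq (norm_nonneg _)]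

end Matrix

theorem stmt9_general (n : ℕ)
    (A P : Matrix (Fin n) (Fin n) ℝ →ₗ[ℝ] Matrix (Fin n) (Fin n) ℝ)
    (hApos : ∀ Z, 0 ≤ finner Z (A Z))
    (hAA : ∀ Z, finner Z (A Z) ≤ finner Z (A (A Z)))
    (hPidem : ∀ Z, P (P Z) = P Z)
    (hPsa : ∀ Z W, finner (P Z) W = finner Z (P W))
    (hcontr : ∀ Z, frob (P Z - P (A (P Z))) ≤ (1/2) * frob Z)
    (H : Matrix (Fin n) (Fin n) ℝ) :
    (1/2) * frob (P H)^2 ≤ frob (A (P H))^2 := by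
  set e := frobeniusEquiv n
  have hconj : ∀ (f : Matrix (Fin n) (Fin n) ℝ →ₗ[ℝ] _) X, e.conj f (e X) = e (f X) := by simp
  have hpos : ∀ z, 0 ≤ ⟪z, e.conj A z⟫ := e.surjective.forall.2 fun X => by
    rw [hconj, inner_frobeniusEquiv]; exact hApos X
  have hsq : ∀ z, ⟪z, e.conj A z⟫ ≤ ⟪z, e.conj A (e.conj A z)⟫ := e.surjective.forall.2 fun X => by
    rw [hconj, hconj, inner_frobeniusEquiv, inner_frobeniusEquiv]; exact hAA X
  have hP : (e.conj P).IsSymmetric := by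
    intro u v
    obtain ⟨X, rfl⟩ := e.surjective u
    obtain ⟨Y, rfl⟩ := e.surjective v
    rw [hconj, hconj, inner_frobeniusEquiv, inner_frobeniusEquiv]
    exact hPsa X Y
  have hm : e.conj P (e (P H)) = e (P H) := by rw [hconj, hPidem]
  have hc : ‖e (P H) - e.conj P (e.conj A (e (P H)))‖ ≤ 1 / 2 * ‖e (P H)‖ := by
    rw [hconj, hconj, ← map_sub, ← frob_eq_norm_frobeniusEquiv,
      ← frob_eq_norm_frobeniusEquiv]
    simpa only [hPidem] using hcontr (P H)
  have := half_mul_norm_sq_le_norm_apply_sq hpos hsq hP hm hc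
  rwa [hconj, ← frob_eq_norm_frobeniusEquiv, ← frob_eq_norm_frobeniusEquiv] at this

theorem stmt9 (n : ℕ)
    (A P : Matrix (Fin n) (Fin n) ℝ →ₗ[ℝ] Matrix (Fin n) (Fin n) ℝ)
    (T : Submodule ℝ (Matrix (Fin n) (Fin n) ℝ))
    (hApos : ∀ Z, 0 ≤ finner Z (A Z))
    (hAA : ∀ Z, finner Z (A Z) ≤ finner Z (A (A Z)))
    (hPidem : ∀ Z, P (P Z) = P Z)
    (hPsa : ∀ Z W, finner (P Z) W = finner Z (P W))
    (hPrange : LinearMap.range P = T)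
    (hcontr : ∀ Z, frob (P Z - P (A (P Z))) ≤ (1/2) * frob Z)
    (H : Matrix (Fin n) (Fin n) ℝ) :
    (1/2) * frob (P H)^2 ≤ frob (A (P H))^2 :=
  stmt9_general n A P hApos hAA hPidem hPsa hcontr H
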